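/- Let λ > 1, let L_λ(x,y) = (λ·x, λ⁻¹·y), let h : ℝ² → ℝ² be a homeomorphism, and set f = h⁻¹ ∘ L_λ ∘ h. Define D_s((x₁,y₁),(x₂,y₂)) = |y₁ − y₂|, D_u((x₁,y₁),(x₂,y₂)) = |x₁ − x₂|, D = D_s + D_u, and U(p,q) = D(h(p),h(q)). Then the following are equivalent: (i) for every k > 0 there exists k' > 0 such that U(p,q) < k implies d(p,q) < k' for all p,q ∈ ℝ², where d is the Euclidean distance; (ii) the conjugation preserves stable and unstable curves in the sense of the usual distance, i.e. for every k > 0 there exists k' > 0 such that for all p,q ∈ ℝ²: if h(p) and h(q) have the same first coordinate and their second coordinates differ by at most k, then d(fⁿ(p),fⁿ(q)) < k' for all n ≥ 0; and if h(p) and h(q) have the same second coordinate and their first coordinates differ by at most k, then d(fⁿ(p),fⁿ(q)) < k' for all n ≤ 0. -/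

import Mathlib

/-!
In the coordinates given by `h`, the iterate `f ^ n` is the hyperbolic map
`(x, y) ↦ (l ^ n x, l ^ (-n) y)`, which scales `D_s` by `l ^ (-n)` and `D_u` by `l ^ n`.
Hence `U` does not grow along forward orbits of pairs on a stable curve, nor along backward
orbits of pairs on an unstable curve, and (i) gives (ii). Conversely, already the case `n = 0`
of (ii) gives (i): `p` and `q` are joined through the corner `h⁻¹ ((h p).1, (h q).2)` by a
stable and an unstable segment, each of `D`-length less than `U p q`.
-/

/-- The stable pseudometric of the linear model: `D_s(z,w) = |z₂ − w₂|`. -/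
def linDs (z w : ℝ × ℝ) : ℝ := |z.2 - w.2|

/-- The unstable pseudometric of the linear model: `D_u(z,w) = |z₁ − w₁|`. -/
def linDu (z w : ℝ × ℝ) : ℝ := |z.1 - w.1|

/-- The Lyapunov metric of the linear model: `D = D_s + D_u`. -/
def linD (z w : ℝ × ℝ) : ℝ := linDs z w + linDu z w

noncomputable def hypMap (t : ℝ) (z : ℝ × ℝ) : ℝ × ℝ := (t * z.1, t⁻¹ * z.2)

@[simp]
lemma hypMap_one (z : ℝ × ℝ) : hypMap 1 z = z := by
  simp [hypMap]

@[simp]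
lemma hypMap_hypMap (s t : ℝ) (z : ℝ × ℝ) : hypMap s (hypMap t z) = hypMap (s * t) z := by
  simp only [hypMap, mul_inv, Prod.mk.injEq]
  constructor <;> ring

lemma linDs_hypMap (t : ℝ) (z w : ℝ × ℝ) :
    linDs (hypMap t z) (hypMap t w) = |t|⁻¹ * linDs z w := by
  simp only [linDs, hypMap, ← mul_sub, abs_mul, abs_inv]

lemma linDu_hypMap (t : ℝ) (z w : ℝ × ℝ) :
    linDu (hypMap t z) (hypMap t w) = |t| * linDu z w := by
  simp only [linDu, hypMap, ← mul_sub, abs_mul]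

section Conjugacy

variable {α : Type*} {h : α → ℝ × ℝ} {f : Equiv.Perm α} {l : ℝ}

lemma apply_inv_of_semiconj_hypMap (hl : l ≠ 0) (hf : ∀ z, h (f z) = hypMap l (h z))
    (z : α) : h (f⁻¹ z) = hypMap l⁻¹ (h z) := by
  have hz : h z = hypMap l (h (f⁻¹ z)) := by
    rw [← hf, ← Equiv.Perm.mul_apply, mul_inv_cancel, Equiv.Perm.one_apply]
  rw [hz, hypMap_hypMap, inv_mul_cancel₀ hl, hypMap_one]

lemma apply_zpow_of_semiconj_hypMap (hl : l ≠ 0) (hf : ∀ z, h (f z) = hypMap l (h z))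
    (n : ℤ) (z : α) : h ((f ^ n) z) = hypMap (l ^ n) (h z) := by
  induction n using Int.induction_on generalizing z with
  | zero => simp
  | succ n ih =>
    rw [zpow_add_one, Equiv.Perm.mul_apply, ih, hf, hypMap_hypMap, zpow_add_one₀ hl]
  | pred n ih =>
    rw [zpow_sub_one, Equiv.Perm.mul_apply, ih, apply_inv_of_semiconj_hypMap hl hf,
      hypMap_hypMap, zpow_sub_one₀ hl]

lemma linD_zpow_le_linDs_of_fst_eq (hl : 1 ≤ l) (hf : ∀ z, h (f z) = hypMap l (h z))
    {p q : α} (hpq : (h p).1 = (h q).1) {n : ℤ} (hn : 0 ≤ n) :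
    linD (h ((f ^ n) p)) (h ((f ^ n) q)) ≤ linDs (h p) (h q) := by
  have hln : 1 ≤ |l ^ n| := by
    rw [abs_of_pos (by positivity)]
    exact one_le_zpow₀ hl hn
  have hu : linDu (h p) (h q) = 0 := by simp [linDu, hpq]
  rw [apply_zpow_of_semiconj_hypMap (by positivity) hf, apply_zpow_of_semiconj_hypMap
    (by positivity) hf, linD, linDs_hypMap, linDu_hypMap, hu, mul_zero, add_zero]
  exact mul_le_of_le_one_left (abs_nonneg _) (inv_le_one_of_one_le₀ hln)

lemma linD_zpow_le_linDu_of_snd_eq (hl : 1 ≤ l) (hf : ∀ z, h (f z) = hypMap l (h z))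
    {p q : α} (hpq : (h p).2 = (h q).2) {n : ℤ} (hn : n ≤ 0) :
    linD (h ((f ^ n) p)) (h ((f ^ n) q)) ≤ linDu (h p) (h q) := by
  have hln : |l ^ n| ≤ 1 := by
    rw [abs_of_pos (by positivity)]
    exact zpow_le_one_of_nonpos₀ hl hn
  have hs : linDs (h p) (h q) = 0 := by simp [linDs, hpq]
  rw [apply_zpow_of_semiconj_hypMap (by positivity) hf, apply_zpow_of_semiconj_hypMap
    (by positivity) hf, linD, linDs_hypMap, linDu_hypMap, hs, mul_zero, zero_add]
  exact mul_le_of_le_one_left (abs_nonneg _) hln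

end Conjugacy

lemma dist_lt_two_mul_of_linD_lt {α : Type*} [PseudoMetricSpace α] {h : α → ℝ × ℝ}
    (hh : Function.Surjective h) {k k' : ℝ}
    (hs : ∀ p q, (h p).1 = (h q).1 → linDs (h p) (h q) ≤ k → dist p q < k')
    (hu : ∀ p q, (h p).2 = (h q).2 → linDu (h p) (h q) ≤ k → dist p q < k')
    {p q : α} (hpq : linD (h p) (h q) < k) : dist p q < 2 * k' := by
  obtain ⟨r, hr⟩ := hh ((h p).1, (h q).2)
  simp only [linD, linDs, linDu] at hpq
  have hpr : dist p r < k' := hs p r (by rw [hr]) <| by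
    simp only [linDs, hr]
    linarith [abs_nonneg ((h p).1 - (h q).1)]
  have hrq : dist r q < k' := hu r q (by rw [hr]) <| by
    simp only [linDu, hr]
    linarith [abs_nonneg ((h p).2 - (h q).2)]
  linarith [dist_triangle p r q]

theorem U_comparable_iff_conjugation_preserves_curves
    (l : ℝ) (hl : 1 < l) (h : ℝ × ℝ ≃ₜ ℝ × ℝ)
    (f : Equiv.Perm (ℝ × ℝ))
    (hf : ∀ z : ℝ × ℝ, f z = h.symm (l * (h z).1, l⁻¹ * (h z).2))
    (U : ℝ × ℝ → ℝ × ℝ → ℝ) (hU : ∀ p q, U p q = linD (h p) (h q)) :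
    (∀ k > (0:ℝ), ∃ k' > (0:ℝ), ∀ p q : ℝ × ℝ, U p q < k → dist p q < k') ↔
    (∀ k > (0:ℝ), ∃ k' > (0:ℝ), ∀ p q : ℝ × ℝ,
      ((h p).1 = (h q).1 → |(h p).2 - (h q).2| ≤ k →
        ∀ n : ℤ, 0 ≤ n → dist ((f ^ n) p) ((f ^ n) q) < k') ∧
      ((h p).2 = (h q).2 → |(h p).1 - (h q).1| ≤ k →
        ∀ n : ℤ, n ≤ 0 → dist ((f ^ n) p) ((f ^ n) q) < k')) := by
  have hfL : ∀ z, h (f z) = hypMap l (h z) := fun z => by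
    rw [hf]
    exact h.apply_symm_apply _
  simp only [hU]
  constructor
  · intro H k hk
    obtain ⟨k', hk', hK⟩ := H (k + 1) (by linarith)
    refine ⟨k', hk', fun p q => ⟨fun hleaf hgap n hn => hK _ _ ?_,
      fun hleaf hgap n hn => hK _ _ ?_⟩⟩
    · exact (linD_zpow_le_linDs_of_fst_eq hl.le hfL hleaf hn).trans_lt
        (hgap.trans_lt (lt_add_one k))
    · exact (linD_zpow_le_linDu_of_snd_eq hl.le hfL hleaf hn).trans_lt
        (hgap.trans_lt (lt_add_one k))
  · intro H k hk
    obtain ⟨k', hk', hK⟩ := H k hk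
    refine ⟨2 * k', by positivity, fun p q => dist_lt_two_mul_of_linD_lt h.surjective ?_ ?_⟩
    · exact fun p q hleaf hgap => by simpa using (hK p q).1 hleaf hgap 0 le_rfl
    · exact fun p q hleaf hgap => by simpa using (hK p q).2 hleaf hgap 0 le_rfl
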